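/- Let Δ be a pure strongly connected d-dimensional simplicial complex on [n] with a unit interval order, and suppose Δ is not a simplex. Then the deletion del_Δ(n) of the largest vertex n is a pure strongly connected d-dimensional unit interval complex on vertex set [n-1]. -/

import Mathlib

open Finset

/-- A simplicial complex on vertex set `ℕ`, given as the finite family of all of its
faces, closed under taking subsets. -/
def IsComplex (Δ : Finset (Finset ℕ)) : Prop :=
  ∀ F ∈ Δ, ∀ G ⊆ F, G ∈ Δ

/-- `F` is a facet (maximal face) of `Δ`. -/
def IsFacet (Δ : Finset (Finset ℕ)) (F : Finset ℕ) : Prop :=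
  F ∈ Δ ∧ ∀ G ∈ Δ, F ⊆ G → F = G

/-- The finset of facets of `Δ`. -/
def facets (Δ : Finset (Finset ℕ)) : Finset (Finset ℕ) :=
  Δ.filter fun F => ∀ G ∈ Δ, F ⊆ G → F = G

/-- `Δ` is pure of dimension `d`: every facet has `d + 1` vertices. -/
def IsPure (d : ℕ) (Δ : Finset (Finset ℕ)) : Prop :=
  ∀ F, IsFacet Δ F → F.card = d + 1

/-- Dual graph of a pure `d`-dimensional complex: nodes are facets, two facets are
adjacent iff they share a face with `d` elements (a codimension-one face). -/
def dualGraph (d : ℕ) (Δ : Finset (Finset ℕ)) : SimpleGraph {F // F ∈ facets Δ} :=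
  SimpleGraph.fromRel fun F G => ((F : Finset ℕ) ∩ (G : Finset ℕ)).card = d

/-- `Δ` is strongly connected: its dual graph is connected. -/
def StronglyConnected (d : ℕ) (Δ : Finset (Finset ℕ)) : Prop :=
  (dualGraph d Δ).Connected

/-- The labeling of the vertices by `ℕ` is a unit interval order: whenever
`F = {v₀ < v₁ < ⋯ < v_d}` is a facet, every `(d+1)`-element subset of the integer
interval `{v₀, v₀+1, …, v_d}` is a facet. -/
def UnitIntervalOrder (d : ℕ) (Δ : Finset (Finset ℕ)) : Prop :=
  ∀ F, IsFacet Δ F → ∀ hF : F.Nonempty,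
    ∀ S ⊆ Finset.Icc (F.min' hF) (F.max' hF), S.card = d + 1 → IsFacet Δ S

/-- The increasing list of the vertices of a face. -/
def sortedList (F : Finset ℕ) : List ℕ := F.sort (· ≤ ·)

/-- Lexicographic order on faces, comparing the increasing lists of vertices. -/
def faceLexLt (F G : Finset ℕ) : Prop :=
  List.Lex (· < ·) (sortedList F) (sortedList G)

/-- `L` lists exactly the facets of `Δ`, in lexicographic order. -/
def LexFacetList (Δ : Finset (Finset ℕ)) (L : List (Finset ℕ)) : Prop :=
  L.Nodup ∧ L.toFinset = facets Δ ∧ L.Pairwise faceLexLt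

/-- `L` is a shelling order of the pure `d`-dimensional complex `Δ`: it lists the
facets of `Δ` so that for each `k`, the intersection of `⟨L[k+1]⟩` with
`⟨L[0], …, L[k]⟩` is pure of dimension `d - 1`, i.e. it is nonempty and each of
its faces is contained in a common `d`-element face of `L[k+1]` and some earlier
facet. -/
def IsShellingOrder (d : ℕ) (Δ : Finset (Finset ℕ)) (L : List (Finset ℕ)) : Prop :=
  L.Nodup ∧ L.toFinset = facets Δ ∧
  ∀ (k : ℕ) (hk : k + 1 < L.length),
    (∃ τ ⊆ L.get ⟨k + 1, hk⟩, τ.card = d ∧ ∃ G ∈ L.take (k + 1), τ ⊆ G) ∧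
    (∀ σ ⊆ L.get ⟨k + 1, hk⟩, (∃ G ∈ L.take (k + 1), σ ⊆ G) →
      ∃ τ, σ ⊆ τ ∧ τ ⊆ L.get ⟨k + 1, hk⟩ ∧ τ.card = d ∧ ∃ G ∈ L.take (k + 1), τ ⊆ G)

/-- `Δ` is shellable (as a pure `d`-dimensional complex). -/
def Shellable (d : ℕ) (Δ : Finset (Finset ℕ)) : Prop :=
  ∃ L, IsShellingOrder d Δ L

/-- The link of the vertex `v` in `Δ`. -/
def linkC (Δ : Finset (Finset ℕ)) (v : ℕ) : Finset (Finset ℕ) :=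
  Δ.filter fun E => v ∉ E ∧ insert v E ∈ Δ

/-- The deletion of the vertex `v` from `Δ`. -/
def delC (Δ : Finset (Finset ℕ)) (v : ℕ) : Finset (Finset ℕ) :=
  Δ.filter fun E => v ∉ E

/-- Vertex decomposability: `Δ` is a simplex (possibly the void/empty simplex `{∅}`),
or it has a shedding vertex `v` whose link and deletion are vertex decomposable and
such that every facet of the deletion is a facet of `Δ`. -/
inductive VertexDecomposable : Finset (Finset ℕ) → Prop
  | simplex (V : Finset ℕ) : VertexDecomposable V.powerset
  | shed (Δ : Finset (Finset ℕ)) (v : ℕ) :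
      VertexDecomposable (linkC Δ v) → VertexDecomposable (delC Δ v) →
      (∀ F, IsFacet (delC Δ v) F → IsFacet Δ F) → VertexDecomposable Δ

/-!
Let `F` be a facet through the largest vertex `n`. Since `Δ` is strongly connected and not a
simplex, `F` shares `d` vertices with another facet `F₂`. If `n ∉ F₂`, then `F \ {n} ⊆ F₂`.
Otherwise the unit interval order makes every `(d+1)`-subset of `[min (F ∪ F₂), n - 1]` a facet,
and this interval has at least `d + 1` elements. Either way `F \ {n}` lies in a facet avoiding
`n`, so the facets of `del_Δ(n)` are exactly the facets of `Δ` avoiding `n`, which gives purity,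
the unit interval order and the vertex set. For strong connectivity, send each facet `F` of `Δ`
to a facet of the deletion containing `F \ {n}`: adjacent facets are sent to facets joined
through `F₂`, or through the Johnson graph of the interval above.
-/

section

variable {Δ : Finset (Finset ℕ)} {d n : ℕ} {A F F₂ G K K₂ : Finset ℕ}

theorem mem_facets : F ∈ facets Δ ↔ IsFacet Δ F := by
  simp [facets, IsFacet]

theorem exists_isFacet_superset (hG : G ∈ Δ) : ∃ F, IsFacet Δ F ∧ G ⊆ F := by
  obtain ⟨F, hF, hmax⟩ :=
    (Δ.filter (G ⊆ ·)).exists_max_image card ⟨G, mem_filter.2 ⟨hG, subset_rfl⟩⟩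
  obtain ⟨hFΔ, hGF⟩ := mem_filter.1 hF
  exact ⟨F, ⟨hFΔ, fun H hH hFH =>
    eq_of_subset_of_card_le hFH (hmax H (mem_filter.2 ⟨hH, hGF.trans hFH⟩))⟩, hGF⟩

theorem IsPure.le_card_erase (hP : IsPure d Δ) (hF : IsFacet Δ F) (v : ℕ) :
    d ≤ (F.erase v).card := by
  have := pred_card_le_card_erase (s := F) (a := v)
  rw [hP F hF] at this
  simpa using this

theorem isComplex_delC (hC : IsComplex Δ) (v : ℕ) : IsComplex (delC Δ v) := fun F hF G hGF =>
  mem_filter.2 ⟨hC F (mem_filter.1 hF).1 G hGF, fun hv => (mem_filter.1 hF).2 (hGF hv)⟩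

theorem erase_mem_delC (hC : IsComplex Δ) (hF : F ∈ Δ) (v : ℕ) :
    F.erase v ∈ delC Δ v :=
  mem_filter.2 ⟨hC F hF _ (erase_subset v F), notMem_erase v F⟩

theorem IsFacet.isFacet_delC (hF : IsFacet Δ F) {v : ℕ} (hv : v ∉ F) : IsFacet (delC Δ v) F :=
  ⟨mem_filter.2 ⟨hF.1, hv⟩, fun G hG => hF.2 G (mem_filter.1 hG).1⟩

theorem sup_delC (hC : IsComplex Δ) (v : ℕ) : (delC Δ v).sup id = (Δ.sup id).erase v := by
  ext x
  simp only [mem_erase, mem_sup, id, delC, mem_filter]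
  constructor
  · rintro ⟨G, ⟨hG, hvG⟩, hxG⟩
    exact ⟨ne_of_mem_of_not_mem hxG hvG, G, hG, hxG⟩
  · rintro ⟨hxv, G, hG, hxG⟩
    exact ⟨G.erase v, mem_filter.1 (erase_mem_delC hC hG v), mem_erase.2 ⟨hxv, hxG⟩⟩

theorem isFacet_of_isFacet_delC {v : ℕ}
    (hcover : ∀ F, IsFacet Δ F → v ∈ F → ∃ H, IsFacet Δ H ∧ v ∉ H ∧ F.erase v ⊆ H)
    (hG : IsFacet (delC Δ v) G) : IsFacet Δ G := by
  obtain ⟨hGΔ, hvG⟩ := mem_filter.1 hG.1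
  obtain ⟨F, hF, hGF⟩ := exists_isFacet_superset hGΔ
  obtain ⟨H, hH, hvH, hGH⟩ : ∃ H, IsFacet Δ H ∧ v ∉ H ∧ G ⊆ H := by
    by_cases hvF : v ∈ F
    · obtain ⟨H, hH, hvH, hFH⟩ := hcover F hF hvF
      exact ⟨H, hH, hvH, fun x hx => hFH (mem_erase.2 ⟨ne_of_mem_of_not_mem hx hvG, hGF hx⟩)⟩
    · exact ⟨F, hF, hvF, hGF⟩
  rwa [hG.2 H (mem_filter.2 ⟨hH.1, hvH⟩) hGH]

theorem exists_isFacet_ne (hC : IsComplex Δ) (hΔ : Δ ≠ (Δ.sup id).powerset)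
    (hF : IsFacet Δ F) : ∃ G, IsFacet Δ G ∧ F ≠ G := by
  by_contra! hall
  refine hΔ (Subset.antisymm (fun G hG => mem_powerset.2 (le_sup (f := id) hG)) fun S hS => ?_)
  refine hC F hF.1 S ((mem_powerset.1 hS).trans (Finset.sup_le fun G hG => ?_))
  obtain ⟨H, hH, hGH⟩ := exists_isFacet_superset hG
  exact (hall H hH).symm ▸ hGH

theorem dualGraph_adj {u v : {F // F ∈ facets Δ}} :
    (dualGraph d Δ).Adj u v ↔ (u : Finset ℕ) ≠ v ∧ ((u : Finset ℕ) ∩ v).card = d := by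
  rw [dualGraph, SimpleGraph.fromRel_adj, inter_comm (v : Finset ℕ), or_self, Ne,
    Subtype.ext_iff]

theorem StronglyConnected.exists_card_inter_eq (hSC : StronglyConnected d Δ)
    (hF : IsFacet Δ F) (hG : IsFacet Δ G) (hFG : F ≠ G) :
    ∃ F₂, IsFacet Δ F₂ ∧ (F ∩ F₂).card = d := by
  have : Nontrivial {F // F ∈ facets Δ} :=
    nontrivial_of_ne ⟨F, mem_facets.2 hF⟩ ⟨G, mem_facets.2 hG⟩ (by simpa using hFG)
  obtain ⟨F₂, hadj⟩ := hSC.preconnected.exists_adj_of_nontrivial ⟨F, mem_facets.2 hF⟩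
  exact ⟨F₂, mem_facets.1 F₂.2, (dualGraph_adj.1 hadj).2⟩

theorem dualGraph_reachable_of_common_subset (hK : K ∈ facets Δ) (hK₂ : K₂ ∈ facets Δ)
    (hKc : K.card = d + 1) (hK₂c : K₂.card = d + 1) (hAK : A ⊆ K) (hAK₂ : A ⊆ K₂)
    (hA : d ≤ A.card) : (dualGraph d Δ).Reachable ⟨K, hK⟩ ⟨K₂, hK₂⟩ := by
  by_cases hKK₂ : K = K₂
  · subst hKK₂; rfl
  have hle : d ≤ (K ∩ K₂).card := hA.trans (card_le_card (subset_inter hAK hAK₂))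
  refine SimpleGraph.Adj.reachable (dualGraph_adj.2 ⟨hKK₂, ?_⟩)
  show (K ∩ K₂).card = d
  by_contra! hne
  have hsub : K ⊆ K₂ := inter_eq_left.1 (eq_of_subset_of_card_le inter_subset_left (by omega))
  exact hKK₂ (eq_of_subset_of_card_le hsub (by omega))

/-- Connectivity of the Johnson graph: trade a vertex of `A \ B` for one of `B \ A`. -/
theorem dualGraph_reachable_of_forall_subset_mem_facets {J : Finset ℕ}
    (hJ : ∀ S ⊆ J, S.card = d + 1 → S ∈ facets Δ) {A B : Finset ℕ} (hAJ : A ⊆ J) (hBJ : B ⊆ J)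
    (hAc : A.card = d + 1) (hBc : B.card = d + 1) :
    (dualGraph d Δ).Reachable ⟨A, hJ A hAJ hAc⟩ ⟨B, hJ B hBJ hBc⟩ := by
  by_cases hBA : B ⊆ A
  · obtain rfl := eq_of_subset_of_card_le hBA (by omega)
    rfl
  obtain ⟨b, hbB, hbA⟩ := not_subset.1 hBA
  obtain ⟨a, haA, haB⟩ : ∃ a ∈ A, a ∉ B := not_subset.1 fun hAB =>
    hBA (eq_of_subset_of_card_le hAB (by omega) ▸ subset_rfl)
  have hbA' : b ∉ A.erase a := fun h => hbA (mem_of_mem_erase h)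
  have hA'J : insert b (A.erase a) ⊆ J := insert_subset (hBJ hbB) ((erase_subset a A).trans hAJ)
  have hA'c : (insert b (A.erase a)).card = d + 1 := by
    rw [card_insert_of_notMem hbA', card_erase_of_mem haA, hAc, Nat.add_sub_cancel]
  have hstep := dualGraph_reachable_of_common_subset (hJ A hAJ hAc) (hJ _ hA'J hA'c) hAc hA'c
    (erase_subset a A) (subset_insert b _) (by rw [card_erase_of_mem haA, hAc]; rfl)
  have : (B \ insert b (A.erase a)).card < (B \ A).card := by
    refine card_lt_card ((ssubset_iff_of_subset fun x hx => ?_).2 ⟨b, mem_sdiff.2 ⟨hbB, hbA⟩, ?_⟩)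
    · obtain ⟨hxB, hxA'⟩ := mem_sdiff.1 hx
      refine mem_sdiff.2 ⟨hxB, fun hxA => hxA' (mem_insert_of_mem (mem_erase.2 ⟨?_, hxA⟩))⟩
      rintro rfl; exact haB hxB
    · simp
  exact hstep.trans (dualGraph_reachable_of_forall_subset_mem_facets hJ hA'J hBJ hA'c hBc)
termination_by (B \ A).card

/-- The set `J` is `[min F, n] \ {n}` for `min F ≤ min F₂`; it has at least `d + 1` elements
because `F ∪ F₂ ⊆ [min F, n]` has `d + 2`. -/
theorem exists_superset_erase_forall_isFacet (hP : IsPure d Δ) (hU : UnitIntervalOrder d Δ)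
    (hle : ∀ G ∈ Δ, ∀ x ∈ G, x ≤ n) (hF : IsFacet Δ F) (hF₂ : IsFacet Δ F₂) (hnF : n ∈ F)
    (hnF₂ : n ∈ F₂) (hcard : (F ∩ F₂).card = d) :
    ∃ J, n ∉ J ∧ F.erase n ⊆ J ∧ F₂.erase n ⊆ J ∧ d + 1 ≤ J.card ∧
      ∀ S ⊆ J, S.card = d + 1 → IsFacet Δ S := by
  wlog hmin : F.min' ⟨n, hnF⟩ ≤ F₂.min' ⟨n, hnF₂⟩ generalizing F F₂
  · obtain ⟨J, hnJ, hF₂J, hFJ, hJc, hJ⟩ :=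
      this hF₂ hF hnF₂ hnF (by rwa [inter_comm]) (le_of_not_ge hmin)
    exact ⟨J, hnJ, hFJ, hF₂J, hJc, hJ⟩
  have hsub : ∀ G (hG : IsFacet Δ G) (hnG : n ∈ G), F.min' ⟨n, hnF⟩ ≤ G.min' ⟨n, hnG⟩ →
      G ⊆ Icc (F.min' ⟨n, hnF⟩) n :=
    fun G hG hnG hq x hx => mem_Icc.2 ⟨hq.trans (min'_le G x hx), hle G hG.1 x hx⟩
  have hmax : F.max' ⟨n, hnF⟩ = n := le_antisymm (max'_le _ _ _ (hle F hF.1)) (le_max' _ _ hnF)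
  refine ⟨(Icc (F.min' ⟨n, hnF⟩) n).erase n, notMem_erase n _,
    erase_subset_erase n (hsub F hF hnF le_rfl), erase_subset_erase n (hsub F₂ hF₂ hnF₂ hmin), ?_,
    fun S hS hSc => ?_⟩
  · have hunion := card_le_card (union_subset (hsub F hF hnF le_rfl) (hsub F₂ hF₂ hnF₂ hmin))
    have := card_union_add_card_inter F F₂
    rw [card_erase_of_mem (mem_Icc.2 ⟨min'_le F n hnF, le_rfl⟩)]
    rw [hP F hF, hP F₂ hF₂] at this
    omega
  · have := hU F hF ⟨n, hnF⟩
    rw [hmax] at this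
    exact this S (hS.trans (erase_subset n _)) hSc

theorem exists_isFacet_notMem_erase_subset (hP : IsPure d Δ) (hU : UnitIntervalOrder d Δ)
    (hle : ∀ G ∈ Δ, ∀ x ∈ G, x ≤ n) (hF : IsFacet Δ F) (hnF : n ∈ F) (hF₂ : IsFacet Δ F₂)
    (hcard : (F ∩ F₂).card = d) : ∃ H, IsFacet Δ H ∧ n ∉ H ∧ F.erase n ⊆ H := by
  by_cases hnF₂ : n ∈ F₂
  · obtain ⟨J, hnJ, hFJ, -, hJc, hJ⟩ :=
      exists_superset_erase_forall_isFacet hP hU hle hF hF₂ hnF hnF₂ hcard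
    obtain ⟨T, hFT, hTJ, hTc⟩ :=
      exists_subsuperset_card_eq hFJ (card_erase_le.trans (hP F hF).le) hJc
    exact ⟨T, hJ T hTJ hTc, fun h => hnJ (hTJ h), hFT⟩
  · have hinter : F ∩ F₂ = F.erase n :=
      eq_of_subset_of_card_le
        (fun x hx => mem_erase.2 ⟨ne_of_mem_of_not_mem (mem_inter.1 hx).2 hnF₂, (mem_inter.1 hx).1⟩)
        (by rw [card_erase_of_mem hnF, hP F hF, hcard]; rfl)
    exact ⟨F₂, hF₂, hnF₂, hinter ▸ inter_subset_right⟩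

theorem dualGraph_delC_reachable_of_notMem (hP : IsPure d Δ)
    (hshed : ∀ K, IsFacet (delC Δ n) K → IsFacet Δ K) (hF₂ : IsFacet Δ F₂)
    (hcard : (F ∩ F₂).card = d) (hnF₂ : n ∉ F₂) (hK : K ∈ facets (delC Δ n))
    (hK₂ : K₂ ∈ facets (delC Δ n)) (hFK : F.erase n ⊆ K) (hFK₂ : F₂.erase n ⊆ K₂) :
    (dualGraph d (delC Δ n)).Reachable ⟨K, hK⟩ ⟨K₂, hK₂⟩ := by
  have hcardK : ∀ K ∈ facets (delC Δ n), K.card = d + 1 := fun K hK =>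
    hP K (hshed K (mem_facets.1 hK))
  have hF₂del := mem_facets.2 (hF₂.isFacet_delC hnF₂)
  rw [erase_eq_of_notMem hnF₂] at hFK₂
  have hFF₂K : F ∩ F₂ ⊆ K := fun x hx =>
    hFK (mem_erase.2 ⟨ne_of_mem_of_not_mem (mem_inter.1 hx).2 hnF₂, (mem_inter.1 hx).1⟩)
  exact (dualGraph_reachable_of_common_subset hK hF₂del (hcardK K hK) (hP F₂ hF₂) hFF₂K
    inter_subset_right hcard.ge).trans
    (dualGraph_reachable_of_common_subset hF₂del hK₂ (hP F₂ hF₂) (hcardK K₂ hK₂) subset_rfl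
    hFK₂ (by rw [hP F₂ hF₂]; omega))

theorem dualGraph_delC_reachable_of_card_inter (hP : IsPure d Δ) (hU : UnitIntervalOrder d Δ)
    (hle : ∀ G ∈ Δ, ∀ x ∈ G, x ≤ n) (hshed : ∀ K, IsFacet (delC Δ n) K → IsFacet Δ K)
    (hF : IsFacet Δ F) (hF₂ : IsFacet Δ F₂) (hcard : (F ∩ F₂).card = d)
    (hK : K ∈ facets (delC Δ n)) (hK₂ : K₂ ∈ facets (delC Δ n)) (hFK : F.erase n ⊆ K)
    (hFK₂ : F₂.erase n ⊆ K₂) : (dualGraph d (delC Δ n)).Reachable ⟨K, hK⟩ ⟨K₂, hK₂⟩ := by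
  by_cases hnF₂ : n ∈ F₂
  swap
  · exact dualGraph_delC_reachable_of_notMem hP hshed hF₂ hcard hnF₂ hK hK₂ hFK hFK₂
  by_cases hnF : n ∈ F
  swap
  · exact (dualGraph_delC_reachable_of_notMem hP hshed hF (by rwa [inter_comm]) hnF hK₂ hK
      hFK₂ hFK).symm
  have hcardK : ∀ K ∈ facets (delC Δ n), K.card = d + 1 := fun K hK =>
    hP K (hshed K (mem_facets.1 hK))
  obtain ⟨J, hnJ, hFJ, hF₂J, hJc, hJ⟩ :=
    exists_superset_erase_forall_isFacet hP hU hle hF hF₂ hnF hnF₂ hcard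
  have hJdel : ∀ S ⊆ J, S.card = d + 1 → S ∈ facets (delC Δ n) := fun S hS hSc =>
    mem_facets.2 ((hJ S hS hSc).isFacet_delC fun h => hnJ (hS h))
  have hcardF := card_erase_of_mem hnF
  have hcardF₂ := card_erase_of_mem hnF₂
  rw [hP F hF, Nat.add_sub_cancel] at hcardF
  rw [hP F₂ hF₂, Nat.add_sub_cancel] at hcardF₂
  obtain ⟨T, hFT, hTJ, hTc⟩ := exists_subsuperset_card_eq hFJ (by omega) hJc
  obtain ⟨T₂, hF₂T₂, hT₂J, hT₂c⟩ := exists_subsuperset_card_eq hF₂J (by omega) hJc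
  have hKT := dualGraph_reachable_of_common_subset hK (hJdel T hTJ hTc) (hcardK K hK) hTc hFK hFT
    hcardF.ge
  have hTT₂ := dualGraph_reachable_of_forall_subset_mem_facets hJdel hTJ hT₂J hTc hT₂c
  have hT₂K₂ := dualGraph_reachable_of_common_subset (hJdel T₂ hT₂J hT₂c) hK₂ hT₂c
    (hcardK K₂ hK₂) hF₂T₂ hFK₂ hcardF₂.ge
  exact (hKT.trans hTT₂).trans hT₂K₂

theorem stronglyConnected_delC (hC : IsComplex Δ) (hP : IsPure d Δ) (hU : UnitIntervalOrder d Δ)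
    (hle : ∀ G ∈ Δ, ∀ x ∈ G, x ≤ n) (hSC : StronglyConnected d Δ)
    (hshed : ∀ K, IsFacet (delC Δ n) K → IsFacet Δ K) : StronglyConnected d (delC Δ n) := by
  have hcover : ∀ F : {F // F ∈ facets Δ}, ∃ K : {K // K ∈ facets (delC Δ n)},
      (F : Finset ℕ).erase n ⊆ K := fun F =>
    have ⟨K, hK, hFK⟩ := exists_isFacet_superset (erase_mem_delC hC (mem_facets.1 F.2).1 n)
    ⟨⟨K, mem_facets.2 hK⟩, hFK⟩
  choose c hc using hcover
  have hmap : ∀ F F₂, (dualGraph d Δ).Reachable F F₂ →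
      (dualGraph d (delC Δ n)).Reachable (c F) (c F₂) := by
    intro F F₂ h
    rw [SimpleGraph.reachable_iff_reflTransGen] at h ⊢
    refine Relation.ReflTransGen.lift' c (fun F F₂ hadj => ?_) _ _ h
    exact (SimpleGraph.reachable_iff_reflTransGen _ _).1
      (dualGraph_delC_reachable_of_card_inter hP hU hle hshed (mem_facets.1 F.2)
        (mem_facets.1 F₂.2) (dualGraph_adj.1 hadj).2 (c F).2 (c F₂).2 (hc F) (hc F₂))
  have hfacet : ∀ K ∈ facets (delC Δ n), IsFacet Δ K := fun K hK => hshed K (mem_facets.1 hK)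
  have hback : ∀ K : {K // K ∈ facets (delC Δ n)},
      (dualGraph d (delC Δ n)).Reachable K (c ⟨K, mem_facets.2 (hfacet K K.2)⟩) :=
    fun K => dualGraph_reachable_of_common_subset K.2 (c _).2 (hP K (hfacet K K.2))
      (hP _ (hfacet _ (c _).2)) (erase_subset n K) (hc ⟨K, _⟩) (hP.le_card_erase (hfacet K K.2) n)
  rw [StronglyConnected, SimpleGraph.connected_iff]
  refine ⟨fun K K₂ => (hback K).trans ((hmap _ _ (hSC.preconnected _ _)).trans (hback K₂).symm),
    ?_⟩
  obtain ⟨F⟩ := hSC.nonempty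
  exact ⟨c F⟩

theorem unitIntervalOrder_delC (hU : UnitIntervalOrder d Δ) (hle : ∀ G ∈ Δ, ∀ x ∈ G, x ≤ n)
    (hshed : ∀ K, IsFacet (delC Δ n) K → IsFacet Δ K) : UnitIntervalOrder d (delC Δ n) := by
  intro G hG hGne S hS hSc
  have hGΔ := hshed G hG
  have hnG := (mem_filter.1 hG.1).2
  have hmax : G.max' hGne < n :=
    (hle G hGΔ.1 _ (max'_mem G hGne)).lt_of_ne fun h => hnG (h ▸ max'_mem G hGne)
  exact (hU G hGΔ hGne S hS hSc).isFacet_delC fun hnS => (mem_Icc.1 (hS hnS)).2.not_gt hmax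

end

theorem stmt4 (n d : ℕ) (Δ : Finset (Finset ℕ))
    (hC : IsComplex Δ) (hP : IsPure d Δ) (hSC : StronglyConnected d Δ)
    (hU : UnitIntervalOrder d Δ) (hV : Δ.sup id = Finset.Icc 1 n)
    (hns : Δ ≠ (Finset.Icc 1 n).powerset) :
    IsComplex (delC Δ n) ∧ IsPure d (delC Δ n) ∧ StronglyConnected d (delC Δ n) ∧
    UnitIntervalOrder d (delC Δ n) ∧ (delC Δ n).sup id = Finset.Icc 1 (n - 1) := by
  have hle : ∀ G ∈ Δ, ∀ x ∈ G, x ≤ n := fun G hG x hx =>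
    (mem_Icc.1 (hV ▸ le_sup (f := id) hG hx)).2
  have hcover : ∀ F, IsFacet Δ F → n ∈ F → ∃ H, IsFacet Δ H ∧ n ∉ H ∧ F.erase n ⊆ H := by
    intro F hF hnF
    obtain ⟨G, hG, hFG⟩ := exists_isFacet_ne hC (by rwa [hV]) hF
    obtain ⟨F₂, hF₂, hcard⟩ := hSC.exists_card_inter_eq hF hG hFG
    exact exists_isFacet_notMem_erase_subset hP hU hle hF hnF hF₂ hcard
  have hshed : ∀ K, IsFacet (delC Δ n) K → IsFacet Δ K := fun K => isFacet_of_isFacet_delC hcover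
  refine ⟨isComplex_delC hC n, fun K hK => hP K (hshed K hK),
    stronglyConnected_delC hC hP hU hle hSC hshed, unitIntervalOrder_delC hU hle hshed, ?_⟩
  rw [sup_delC hC, hV]
  ext x
  simp only [mem_erase, mem_Icc]
  omega
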